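/- arXiv:2005.06502 — 3 statements merged into one kernel-verified Lean document; each statement's English description precedes it below -/
import Mathlib

section
/- In the gambler's ruin random walk with ties on {0,...,N} with 0 < p, 0 < q, the probability of never being absorbed (at 0 or N) starting from any state i is 0. -/
open MeasureTheory ProbabilityTheory Filter

/-!
Almost surely the steps lie in `{-1, 0, 1}`, so a path that is never absorbed moves by at most
one at a time without ever visiting `0` or `N`, and hence stays in the open interval `(0, N)`.
But `N` consecutive up-steps would carry it from a state above `0` to a state above `N`.
Such a run occurs almost surely: the disjoint blocks `[k N, k N + N)` are each all up-steps with
probability `p ^ N`, independently, so the second Borel–Cantelli lemma applies.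
-/

lemma Nat.pairwiseDisjoint_Ico_mul (L : ℕ) :
    Set.univ.PairwiseDisjoint fun k : ℕ ↦ Finset.Ico (k * L) (k * L + L) := by
  intro a _ b _ hab
  refine Finset.disjoint_left.2 fun n ha hb ↦ hab ?_
  rw [Finset.mem_Ico] at ha hb
  rw [← Nat.div_eq_of_lt_le ha.1 (by linarith [ha.2]),
    Nat.div_eq_of_lt_le hb.1 (by linarith [hb.2])]

namespace ProbabilityTheory

variable {Ω : Type*} [MeasurableSpace Ω] {μ : Measure Ω}

lemma iIndepFun.iIndepSet_preimage {ι β : Type*} [MeasurableSpace β] {X : ι → Ω → β}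
    (h : iIndepFun X μ) (hX : ∀ i, Measurable (X i)) {S : Set β} (hS : MeasurableSet S) :
    iIndepSet (fun i ↦ X i ⁻¹' S) μ :=
  (iIndepSet_iff_meas_biInter fun i ↦ hX i hS).2 fun s ↦
    h.measure_inter_preimage_eq_mul s fun _ _ ↦ hS

lemma iIndepSet.biInter_Ico_mul {E : ℕ → Set Ω} (h : iIndepSet E μ)
    (hE : ∀ n, MeasurableSet (E n)) (L : ℕ) :
    iIndepSet (fun k ↦ ⋂ n ∈ Finset.Ico (k * L) (k * L + L), E n) μ := by
  classical
  refine (iIndepSet_iff_meas_biInter fun k ↦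
    Finset.measurableSet_biInter _ fun n _ ↦ hE n).2 fun s ↦ ?_
  rw [← Finset.set_biInter_biUnion, h.meas_biInter,
    Finset.prod_biUnion ((Nat.pairwiseDisjoint_Ico_mul L).subset (Set.subset_univ _))]
  exact Finset.prod_congr rfl fun k _ ↦ (h.meas_biInter _).symm

theorem iIndepSet.ae_exists_forall_mem_add {E : ℕ → Set Ω} (h : iIndepSet E μ)
    (hE : ∀ n, MeasurableSet (E n)) {δ : ENNReal} (hδ : ∀ n, δ ≤ μ (E n)) (hδ0 : δ ≠ 0)
    (L : ℕ) : ∀ᵐ ω ∂μ, ∃ m, ∀ j < L, ω ∈ E (m + j) := by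
  have := h.isProbabilityMeasure
  set B := fun k ↦ ⋂ n ∈ Finset.Ico (k * L) (k * L + L), E n
  have hBm : ∀ k, MeasurableSet (B k) := fun k ↦
    Finset.measurableSet_biInter _ fun n _ ↦ hE n
  have hB : ∀ k, δ ^ L ≤ μ (B k) := fun k ↦ by
    have := Finset.pow_card_le_prod (Finset.Ico (k * L) (k * L + L)) (μ ∘ E) δ fun n _ ↦ hδ n
    rwa [Nat.card_Ico, Nat.add_sub_cancel_left, Function.comp_def, ← h.meas_biInter] at this
  have hsum : ∑' k, μ (B k) = ⊤ := top_unique <|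
    calc ⊤ = ∑' _ : ℕ, δ ^ L := (ENNReal.tsum_const_eq_top_of_ne_zero (pow_ne_zero L hδ0)).symm
      _ ≤ ∑' k, μ (B k) := ENNReal.tsum_le_tsum hB
  have hlimsup := measure_limsup_eq_one hBm (h.biInter_Ico_mul hE L) hsum
  filter_upwards [mem_ae_iff.2 ((prob_compl_eq_zero_iff (.measurableSet_limsup hBm)).2 hlimsup)]
    with ω hω
  obtain ⟨k, hk⟩ := (mem_limsup_iff_frequently_mem.1 hω).exists
  exact ⟨k * L, fun j hj ↦ Set.mem_iInter₂.1 hk _ (Finset.mem_Ico.2 ⟨by omega, by omega⟩)⟩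

lemma ae_mem_of_sum_measure_preimage_singleton_eq_one [IsProbabilityMeasure μ] {β : Type*}
    [MeasurableSpace β] [MeasurableSingletonClass β] {Y : Ω → β} (hY : Measurable Y)
    {s : Finset β} (h : ∑ b ∈ s, μ (Y ⁻¹' {b}) = 1) : ∀ᵐ ω ∂μ, Y ω ∈ s := by
  rw [sum_measure_preimage_singleton s fun b _ ↦ hY (measurableSet_singleton b)] at h
  exact mem_ae_iff.2 ((prob_compl_eq_zero_iff (hY s.measurableSet)).2 h)

end ProbabilityTheory

section Walk

variable {w x : ℕ → ℤ}

lemma mem_Ioo_of_forall_ne (hw : ∀ n, w (n + 1) = w n + x n) (hx : ∀ n, |x n| ≤ 1)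
    {N : ℤ} (h0 : w 0 ∈ Set.Icc 0 N) (hne : ∀ n, w n ≠ 0 ∧ w n ≠ N) (n : ℕ) :
    w n ∈ Set.Ioo 0 N := by
  induction n with
  | zero => have := hne 0; grind
  | succ n ih =>
    have := hw n
    have := hne (n + 1)
    have := abs_le.1 (hx n)
    grind

lemma add_eq_of_forall_eq_one (hw : ∀ n, w (n + 1) = w n + x n) {m L : ℕ}
    (hrun : ∀ j < L, x (m + j) = 1) : w (m + L) = w m + L := by
  induction L with
  | zero => simp
  | succ L ih =>
    rw [← add_assoc, hw, ih fun j hj ↦ hrun j (by omega), hrun L (by omega)]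
    push_cast
    ring

end Walk

/-- Gambler's ruin with ties: starting from any state, the probability of never
being absorbed at `0` or `N` is `0`. -/
theorem gamblers_ruin_absorption_as
    {Ω : Type*} [MeasurableSpace Ω] (μ : Measure Ω) [IsProbabilityMeasure μ]
    (p q : ℝ) (hp0 : 0 < p) (hq0 : 0 < q) (hpq : p + q ≤ 1)
    (N i : ℕ) (hi : i ≤ N)
    (X : ℕ → Ω → ℤ) (hXm : ∀ n, Measurable (X n))
    (hindep : iIndepFun X μ)
    (hX1 : ∀ n, μ {ω | X n ω = 1} = ENNReal.ofReal p)
    (hX2 : ∀ n, μ {ω | X n ω = -1} = ENNReal.ofReal q)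
    (hX3 : ∀ n, μ {ω | X n ω = 0} = ENNReal.ofReal (1 - p - q))
    (W : ℕ → Ω → ℤ) (hW0 : ∀ ω, W 0 ω = (i : ℤ))
    (hWrec : ∀ n ω, W (n + 1) ω =
      if W n ω = 0 ∨ W n ω = (N : ℤ) then W n ω else W n ω + X n ω) :
    μ {ω | ∀ n, W n ω ≠ 0 ∧ W n ω ≠ (N : ℤ)} = 0 := by
  have hstep : ∀ᵐ ω ∂μ, ∀ n, |X n ω| ≤ 1 := ae_all_iff.2 fun n ↦ by
    have hsum : ∑ b ∈ ({1, -1, 0} : Finset ℤ), μ (X n ⁻¹' {b}) = 1 := by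
      rw [Finset.sum_insert (by decide), Finset.sum_insert (by decide), Finset.sum_singleton]
      simp only [Set.preimage, Set.mem_singleton_iff, hX1, hX2, hX3]
      rw [← ENNReal.ofReal_add hq0.le (by linarith), ← ENNReal.ofReal_add hp0.le (by linarith)]
      norm_num
    filter_upwards [ae_mem_of_sum_measure_preimage_singleton_eq_one (hXm n) hsum] with ω hω
    simp only [Finset.mem_insert, Finset.mem_singleton] at hω
    rcases hω with h | h | h <;> simp [h]
  have hrun : ∀ᵐ ω ∂μ, ∃ m, ∀ j < N, X (m + j) ω = 1 :=
    (hindep.iIndepSet_preimage hXm (measurableSet_singleton 1)).ae_exists_forall_mem_add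
      (fun n ↦ hXm n (measurableSet_singleton 1)) (fun n ↦ (hX1 n).ge)
      (ENNReal.ofReal_pos.2 hp0).ne' N
  rw [measure_eq_zero_iff_ae_notMem]
  filter_upwards [hstep, hrun] with ω hstep ⟨m, hm⟩ hω
  have hw n : W (n + 1) ω = W n ω + X n ω := by rw [hWrec, if_neg (not_or.2 (hω n))]
  have hIoo := mem_Ioo_of_forall_ne (x := (X · ω)) hw hstep (by simp [hW0, hi]) hω
  have := add_eq_of_forall_eq_one (w := (W · ω)) hw hm
  have := (hIoo m).1
  have := (hIoo (m + N)).2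
  omega
end

section
/- Assume W_1 > W_0 > 0 and let μ_0 = W_0·N/(W_0+W_1). If the initial number of 1's is at least 2μ_0 (and 2μ_0 ≤ N), then the probability that the consensus value is 1 is at least (1-(W_0/W_1)^{4μ_0}) / (1-(W_0/W_1)^{2N}) ≥ 1 - (W_0/W_1)^{4μ_0}. -/
/-!
Write `p`, `q` for the probabilities of an up- and a down-step and `r = q / p = (W₀/W₁)²`.
Since `W n` is independent of the next step `X n` and `p r + q r⁻¹ + (1 - p - q) = 1`, the
expectation of `r ^ W n` stays `r ^ i`. Since the steps have mean `p - q > 0`, the expectation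
of `W n` grows by `p - q` times the probability that the walk is still unabsorbed at time `n`;
as the walk stays in `[0, N]`, these probabilities are summable and tend to `0`.
As `1 - r ^ W n ≤ (1 - r ^ N) · 1{W n ≠ 0}` and `{W n ≠ 0}` lies in the union of
`{W hits N}` and the unabsorbed event, letting `n → ∞` gives
`1 - r ^ i ≤ (1 - r ^ N) · P(W hits N)`, and `r ^ i ≤ (W₀/W₁) ^ (4 μ₀)` because `2 i ≥ 4 μ₀`.
-/

open MeasureTheory ProbabilityTheory Filter Topology

section FiniteRange

variable {Ω α : Type*} [MeasurableSpace Ω] {μ : Measure Ω} [IsFiniteMeasure μ]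
  [MeasurableSpace α] [DiscreteMeasurableSpace α] {f : Ω → α} {s : Finset α}

lemma integrable_comp_of_ae_mem (hf : Measurable f) (hs : ∀ᵐ ω ∂μ, f ω ∈ s) (g : α → ℝ) :
    Integrable (fun ω ↦ g (f ω)) μ :=
  .of_bound (Measurable.of_discrete.comp hf).aestronglyMeasurable (∑ a ∈ s, ‖g a‖) <|
    hs.mono fun _ hω ↦ Finset.single_le_sum (f := fun a ↦ ‖g a‖) (fun _ _ ↦ norm_nonneg _) hω

lemma integral_comp_eq_sum_of_ae_mem (hf : Measurable f) (hs : ∀ᵐ ω ∂μ, f ω ∈ s) (g : α → ℝ) :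
    ∫ ω, g (f ω) ∂μ = ∑ a ∈ s, μ.real (f ⁻¹' {a}) * g a := by
  have hsum : (fun ω ↦ g (f ω)) =ᵐ[μ]
      fun ω ↦ ∑ a ∈ s, (f ⁻¹' {a}).indicator (fun _ ↦ g a) ω := by
    filter_upwards [hs] with ω hω
    classical
    simp [Set.indicator_apply, hω]
  rw [integral_congr_ae hsum, integral_finsetSum _ fun a _ ↦
    (integrable_const _).indicator (hf (measurableSet_singleton a))]
  simp_rw [integral_indicator_const _ (hf (measurableSet_singleton _)), smul_eq_mul]

end FiniteRange

structure IsLazyStep {Ω : Type*} [MeasurableSpace Ω] (μ : Measure Ω) (Y : Ω → ℤ) (p q : ℝ) :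
    Prop where
  measureReal_up : μ.real (Y ⁻¹' {1}) = p
  measureReal_down : μ.real (Y ⁻¹' {-1}) = q
  measureReal_stay : μ.real (Y ⁻¹' {0}) = 1 - p - q

namespace IsLazyStep

variable {Ω : Type*} [MeasurableSpace Ω] {μ : Measure Ω} {Y : Ω → ℤ} {p q : ℝ}

lemma of_measure_eq (hp : 0 ≤ p) (hq : 0 ≤ q) (hpq : p + q ≤ 1)
    (hup : μ {ω | Y ω = 1} = ENNReal.ofReal p) (hdown : μ {ω | Y ω = -1} = ENNReal.ofReal q)
    (hstay : μ {ω | Y ω = 0} = ENNReal.ofReal (1 - p - q)) : IsLazyStep μ Y p q :=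
  ⟨(congrArg ENNReal.toReal hup).trans (ENNReal.toReal_ofReal hp),
    (congrArg ENNReal.toReal hdown).trans (ENNReal.toReal_ofReal hq),
    (congrArg ENNReal.toReal hstay).trans (ENNReal.toReal_ofReal (by linarith))⟩

variable [IsProbabilityMeasure μ]

lemma ae_mem (h : IsLazyStep μ Y p q) (hY : Measurable Y) :
    ∀ᵐ ω ∂μ, Y ω ∈ ({1, -1, 0} : Finset ℤ) := by
  have hmeas : MeasurableSet (Y ⁻¹' ↑({1, -1, 0} : Finset ℤ)) := hY (Finset.measurableSet _)
  have hone : μ.real (Y ⁻¹' ↑({1, -1, 0} : Finset ℤ)) = 1 := by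
    rw [← sum_measureReal_preimage_singleton _ fun a _ ↦ hY (measurableSet_singleton a),
      Finset.sum_insert (by decide), Finset.sum_insert (by decide), Finset.sum_singleton,
      h.measureReal_up, h.measureReal_down, h.measureReal_stay]
    ring
  rw [ae_iff, ← measureReal_eq_zero_iff]
  exact (measureReal_compl hmeas).trans (by rw [probReal_univ, hone, sub_self])

lemma integral_comp (h : IsLazyStep μ Y p q) (hY : Measurable Y) (g : ℤ → ℝ) :
    ∫ ω, g (Y ω) ∂μ = p * g 1 + q * g (-1) + (1 - p - q) * g 0 := by
  rw [integral_comp_eq_sum_of_ae_mem hY (h.ae_mem hY), Finset.sum_insert (by decide),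
    Finset.sum_insert (by decide), Finset.sum_singleton,
    h.measureReal_up, h.measureReal_down, h.measureReal_stay]
  ring

end IsLazyStep

section AbsorbedWalk

variable {Ω : Type*}

def absorbedWalk (N i : ℕ) (X : ℕ → Ω → ℤ) : ℕ → Ω → ℤ
  | 0, _ => i
  | n + 1, ω =>
    if absorbedWalk N i X n ω = 0 ∨ absorbedWalk N i X n ω = N then absorbedWalk N i X n ω
    else absorbedWalk N i X n ω + X n ω

variable {N i : ℕ} {X : ℕ → Ω → ℤ}

lemma eq_absorbedWalk {W : ℕ → Ω → ℤ} (h0 : ∀ ω, W 0 ω = i)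
    (hsucc : ∀ n ω, W (n + 1) ω = if W n ω = 0 ∨ W n ω = N then W n ω else W n ω + X n ω) :
    W = absorbedWalk N i X := by
  funext n ω
  induction n with
  | zero => exact h0 ω
  | succ n ih => rw [hsucc, ih]; rfl

lemma absorbedWalk_mem_Icc (hi : i ≤ N) {ω : Ω} (hX : ∀ k, X k ω ∈ ({1, -1, 0} : Finset ℤ))
    (n : ℕ) : absorbedWalk N i X n ω ∈ Finset.Icc (0 : ℤ) N := by
  induction n with
  | zero => simpa [absorbedWalk] using hi
  | succ n ih =>
    have hXn := hX n
    simp only [Finset.mem_insert, Finset.mem_singleton] at hXn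
    simp only [Finset.mem_Icc] at ih ⊢
    simp only [absorbedWalk]
    split_ifs <;> omega

lemma measurable_absorbedWalk_past (n : ℕ) :
    Measurable[⨆ k ∈ Set.Iio n, MeasurableSpace.comap (X k) inferInstance]
      (absorbedWalk N i X n) := by
  induction n with
  | zero => exact measurable_const
  | succ n ih =>
    have hW := ih.mono (biSup_mono fun k hk ↦ lt_trans hk n.lt_succ_self) le_rfl
    have hX : Measurable[⨆ k ∈ Set.Iio (n + 1), MeasurableSpace.comap (X k) inferInstance]
        (X n) :=
      (comap_measurable (X n)).mono (le_iSup₂_of_le n n.lt_succ_self le_rfl) le_rfl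
    exact Measurable.ite ((hW (measurableSet_singleton 0)).union (hW (measurableSet_singleton _)))
      hW (hW.add hX)

variable [MeasurableSpace Ω] {μ : Measure Ω}

lemma measurable_absorbedWalk (hXm : ∀ k, Measurable (X k)) (n : ℕ) :
    Measurable (absorbedWalk N i X n) :=
  measurable_absorbedWalk_past n |>.mono (iSup₂_le fun k _ ↦ (hXm k).comap_le) le_rfl

lemma indepFun_absorbedWalk (hXm : ∀ k, Measurable (X k)) (hindep : iIndepFun X μ) (n : ℕ) :
    IndepFun (absorbedWalk N i X n) (X n) μ := by
  rw [IndepFun_iff_Indep]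
  have h := indep_iSup_of_disjoint (fun k ↦ (hXm k).comap_le)
    ((iIndepFun_iff_iIndep _ _ _).mp hindep) (S := Set.Iio n) (T := {n}) (by simp)
  exact indep_of_indep_of_le_right
    (indep_of_indep_of_le_left h (measurable_absorbedWalk_past n).comap_le)
    (le_iSup₂_of_le n rfl le_rfl)

lemma ae_absorbedWalk_mem_Icc [IsProbabilityMeasure μ] {p q : ℝ} (hXm : ∀ k, Measurable (X k))
    (hX : ∀ k, IsLazyStep μ (X k) p q) (hi : i ≤ N) :
    ∀ᵐ ω ∂μ, ∀ n, absorbedWalk N i X n ω ∈ Finset.Icc (0 : ℤ) N := by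
  filter_upwards [ae_all_iff.2 fun k ↦ (hX k).ae_mem (hXm k)] with ω hω
  exact absorbedWalk_mem_Icc hi hω

end AbsorbedWalk

section Expectations

variable {Ω : Type*} [MeasurableSpace Ω] {μ : Measure Ω} [IsProbabilityMeasure μ]
  {N i : ℕ} {X : ℕ → Ω → ℤ} {p q : ℝ}
  (hXm : ∀ k, Measurable (X k)) (hindep : iIndepFun X μ) (hX : ∀ k, IsLazyStep μ (X k) p q)
  (hi : i ≤ N)

include hXm hindep hX hi

lemma integral_comp_absorbedWalk_succ {h F G : ℤ → ℝ}
    (hstep : ∀ w x : ℤ, h (if w = 0 ∨ w = N then w else w + x) = h w + F w * G x) (n : ℕ) :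
    ∫ ω, h (absorbedWalk N i X (n + 1) ω) ∂μ =
      ∫ ω, h (absorbedWalk N i X n ω) ∂μ +
        (∫ ω, F (absorbedWalk N i X n ω) ∂μ) * ∫ ω, G (X n ω) ∂μ := by
  have hWm := measurable_absorbedWalk (N := N) (i := i) hXm n
  have hWae : ∀ᵐ ω ∂μ, absorbedWalk N i X n ω ∈ Finset.Icc (0 : ℤ) N :=
    (ae_absorbedWalk_mem_Icc hXm hX hi).mono fun _ hω ↦ hω n
  have hpair : ∀ᵐ ω ∂μ, (absorbedWalk N i X n ω, X n ω) ∈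
      Finset.Icc (0 : ℤ) N ×ˢ ({1, -1, 0} : Finset ℤ) := by
    filter_upwards [hWae, (hX n).ae_mem (hXm n)] with ω h1 h2 using Finset.mem_product.2 ⟨h1, h2⟩
  simp only [absorbedWalk, hstep]
  rw [integral_add (integrable_comp_of_ae_mem hWm hWae h)
      (integrable_comp_of_ae_mem (hWm.prodMk (hXm n)) hpair fun wx ↦ F wx.1 * G wx.2),
    (indepFun_absorbedWalk hXm hindep n).integral_fun_comp_mul_comp hWm.aemeasurable
      (hXm n).aemeasurable Measurable.of_discrete.aestronglyMeasurable
      Measurable.of_discrete.aestronglyMeasurable]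

lemma integral_zpow_absorbedWalk (hp : 0 < p) (hq : 0 < q) (n : ℕ) :
    ∫ ω, (q / p) ^ absorbedWalk N i X n ω ∂μ = (q / p) ^ i := by
  have hr : q / p ≠ 0 := by positivity
  have hG (k : ℕ) : ∫ ω, ((q / p) ^ X k ω - 1) ∂μ = 0 := by
    rw [(hX k).integral_comp (hXm k) fun x ↦ (q / p) ^ x - 1]
    field_simp
    ring
  induction n with
  | zero => simp [absorbedWalk]
  | succ n ih =>
    rw [integral_comp_absorbedWalk_succ hXm hindep hX hi
      (F := fun w ↦ if w = 0 ∨ w = N then 0 else (q / p) ^ w) (G := fun x ↦ (q / p) ^ x - 1)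
      (fun w x ↦ by split_ifs <;> simp [zpow_add₀ hr, mul_sub]) n, hG, mul_zero, add_zero, ih]

lemma integral_absorbedWalk_succ (n : ℕ) :
    ∫ ω, (absorbedWalk N i X (n + 1) ω : ℝ) ∂μ = ∫ ω, (absorbedWalk N i X n ω : ℝ) ∂μ +
      (p - q) * μ.real (absorbedWalk N i X n ⁻¹' {0, (N : ℤ)}ᶜ) := by
  rw [integral_comp_absorbedWalk_succ hXm hindep hX hi
    (F := ({0, (N : ℤ)}ᶜ : Set ℤ).indicator 1) (G := fun x ↦ x)
    (fun w x ↦ by by_cases hw : w = 0 ∨ w = N <;> simp [hw]) n,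
    (hX n).integral_comp (hXm n)]
  simp_rw [← Set.indicator_comp_right, Pi.one_comp]
  rw [integral_indicator_one ((measurable_absorbedWalk hXm n) MeasurableSet.of_discrete)]
  ring

lemma integral_absorbedWalk_eq_add_sum (M : ℕ) :
    ∫ ω, (absorbedWalk N i X M ω : ℝ) ∂μ =
      i + (p - q) * ∑ n ∈ Finset.range M, μ.real (absorbedWalk N i X n ⁻¹' {0, (N : ℤ)}ᶜ) := by
  induction M with
  | zero => simp [absorbedWalk]
  | succ M ih =>
    rw [integral_absorbedWalk_succ hXm hindep hX hi, ih, Finset.sum_range_succ]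
    ring

lemma tendsto_measureReal_absorbedWalk_unabsorbed (hqp : q < p) :
    Tendsto (fun n ↦ μ.real (absorbedWalk N i X n ⁻¹' {0, (N : ℤ)}ᶜ)) atTop (𝓝 0) := by
  refine (summable_of_sum_range_le (c := N / (p - q)) (fun _ ↦ measureReal_nonneg)
    fun M ↦ ?_).tendsto_atTop_zero
  have hWae : ∀ᵐ ω ∂μ, absorbedWalk N i X M ω ∈ Finset.Icc (0 : ℤ) N :=
    (ae_absorbedWalk_mem_Icc hXm hX hi).mono fun _ hω ↦ hω M
  have hle : ∫ ω, (absorbedWalk N i X M ω : ℝ) ∂μ ≤ N := by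
    refine (integral_mono_ae (integrable_comp_of_ae_mem (measurable_absorbedWalk hXm M) hWae _)
      (integrable_const (N : ℝ)) ?_).trans_eq (by simp)
    filter_upwards [hWae] with ω hω
    exact_mod_cast (Finset.mem_Icc.1 hω).2
  rw [le_div_iff₀' (sub_pos.2 hqp)]
  linarith [integral_absorbedWalk_eq_add_sum hXm hindep hX hi M, (Nat.cast_nonneg i : (0 : ℝ) ≤ i)]

lemma one_sub_pow_le_mul_measureReal_ne_zero (hq : 0 < q) (hqp : q ≤ p) (n : ℕ) :
    1 - (q / p) ^ i ≤ (1 - (q / p) ^ N) * μ.real (absorbedWalk N i X n ⁻¹' {0}ᶜ) := by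
  have hp : 0 < p := hq.trans_le hqp
  have hr1 : q / p ≤ 1 := div_le_one_of_le₀ hqp hp.le
  have hWm := measurable_absorbedWalk (N := N) (i := i) hXm n
  have hWae : ∀ᵐ ω ∂μ, absorbedWalk N i X n ω ∈ Finset.Icc (0 : ℤ) N :=
    (ae_absorbedWalk_mem_Icc hXm hX hi).mono fun _ hω ↦ hω n
  have hmeas : MeasurableSet (absorbedWalk N i X n ⁻¹' {0}ᶜ) := hWm MeasurableSet.of_discrete
  calc 1 - (q / p) ^ i = ∫ ω, (1 - (q / p) ^ absorbedWalk N i X n ω) ∂μ := by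
        rw [integral_sub (integrable_const 1) (integrable_comp_of_ae_mem hWm hWae _),
          integral_zpow_absorbedWalk hXm hindep hX hi hp hq]
        simp
    _ ≤ ∫ ω, (absorbedWalk N i X n ⁻¹' {0}ᶜ).indicator (fun _ ↦ 1 - (q / p) ^ N) ω ∂μ := by
        refine integral_mono_ae (integrable_comp_of_ae_mem hWm hWae fun w ↦ 1 - (q / p) ^ w)
          ((integrable_const _).indicator hmeas) ?_
        filter_upwards [hWae] with ω hω
        by_cases h0 : absorbedWalk N i X n ω = 0
        · simp [h0]
        · have hN : absorbedWalk N i X n ω ≤ N := (Finset.mem_Icc.1 hω).2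
          simp only [Set.indicator_of_mem (show ω ∈ absorbedWalk N i X n ⁻¹' {0}ᶜ from h0)]
          have := zpow_le_zpow_right_of_le_one₀ (by positivity) hr1 hN
          simp only [zpow_natCast] at this
          linarith
    _ = (1 - (q / p) ^ N) * μ.real (absorbedWalk N i X n ⁻¹' {0}ᶜ) := by
        rw [integral_indicator_const _ hmeas, smul_eq_mul, mul_comm]

theorem one_sub_pow_le_mul_measureReal_absorbedWalk_hit (hq : 0 < q) (hqp : q < p) :
    1 - (q / p) ^ i ≤ (1 - (q / p) ^ N) * μ.real {ω | ∃ n, absorbedWalk N i X n ω = N} := by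
  have hp : 0 < p := hq.trans hqp
  have hrN : 0 ≤ 1 - (q / p) ^ N := by
    have := pow_le_one₀ (n := N) (by positivity) (div_le_one_of_le₀ hqp.le hp.le)
    linarith
  have hle (n : ℕ) : 1 - (q / p) ^ i ≤ (1 - (q / p) ^ N) *
      (μ.real {ω | ∃ n, absorbedWalk N i X n ω = N} +
        μ.real (absorbedWalk N i X n ⁻¹' {0, (N : ℤ)}ᶜ)) := by
    refine (one_sub_pow_le_mul_measureReal_ne_zero hXm hindep hX hi hq hqp.le n).trans
      (mul_le_mul_of_nonneg_left ((measureReal_mono fun ω hω ↦ ?_).trans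
        (measureReal_union_le _ _)) hrN)
    by_cases hN : absorbedWalk N i X n ω = N
    · exact Or.inl ⟨n, hN⟩
    · exact Or.inr (by simp_all)
  refine ge_of_tendsto' (x := atTop) ?_ hle
  simpa using ((tendsto_measureReal_absorbedWalk_unabsorbed hXm hindep hX hi hqp).const_add
    (μ.real {ω | ∃ n, absorbedWalk N i X n ω = N})).const_mul (1 - (q / p) ^ N)

end Expectations

lemma one_sub_rpow_div_bounds {ρ a P : ℝ} {i N : ℕ} (hρ0 : 0 < ρ) (hρ1 : ρ < 1) (hN : 0 < N)
    (ha : 0 ≤ a) (hai : a ≤ 2 * i) (hP : 0 ≤ P)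
    (h : 1 - ρ ^ (2 * i) ≤ (1 - ρ ^ (2 * N)) * P) :
    (1 - ρ ^ a) / (1 - ρ ^ (2 * (N : ℝ))) ≤ P ∧
      1 - ρ ^ a ≤ (1 - ρ ^ a) / (1 - ρ ^ (2 * (N : ℝ))) := by
  have hA : ρ ^ (2 * i) ≤ ρ ^ a := by
    rw [← Real.rpow_natCast]
    exact Real.rpow_le_rpow_of_exponent_ge hρ0 hρ1.le (by push_cast; linarith)
  have hA1 : ρ ^ a ≤ 1 := Real.rpow_le_one hρ0.le hρ1.le ha
  have hD : ρ ^ (2 * N) < 1 := pow_lt_one₀ hρ0.le hρ1 (by omega)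
  have hD0 : 0 ≤ ρ ^ (2 * N) := by positivity
  rw [show ρ ^ (2 * (N : ℝ)) = ρ ^ (2 * N) by rw [← Real.rpow_natCast]; push_cast; rfl]
  exact ⟨div_le_of_le_mul₀ (by linarith) hP (by linarith),
    le_div_self (by linarith) (by linarith) (by linarith)⟩

theorem epigenetic_majority_conditional_general
    {Ω : Type*} [MeasurableSpace Ω] (μ : Measure Ω) [IsProbabilityMeasure μ]
    (W0 W1 : ℝ) (hW0 : 0 < W0) (hW01 : W0 < W1)
    (N i : ℕ) (hi : i ≤ N)
    (hstart : 2 * (W0 * N / (W0 + W1)) ≤ (i : ℝ))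
    (X : ℕ → Ω → ℤ) (hXm : ∀ n, Measurable (X n))
    (hindep : iIndepFun X μ)
    (hX1 : ∀ n, μ {ω | X n ω = 1} = ENNReal.ofReal ((W1 / (W0 + W1)) ^ 2))
    (hX2 : ∀ n, μ {ω | X n ω = -1} = ENNReal.ofReal ((W0 / (W0 + W1)) ^ 2))
    (hX3 : ∀ n, μ {ω | X n ω = 0} =
      ENNReal.ofReal (1 - (W1 / (W0 + W1)) ^ 2 - (W0 / (W0 + W1)) ^ 2))
    (W : ℕ → Ω → ℤ) (hW0' : ∀ ω, W 0 ω = (i : ℤ))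
    (hWrec : ∀ n ω, W (n + 1) ω =
      if W n ω = 0 ∨ W n ω = (N : ℤ) then W n ω else W n ω + X n ω) :
    (μ {ω | ∃ n, W n ω = (N : ℤ)}).toReal ≥
        (1 - (W0 / W1) ^ (4 * (W0 * N / (W0 + W1)))) /
          (1 - (W0 / W1) ^ (2 * (N : ℝ))) ∧
      (1 - (W0 / W1) ^ (4 * (W0 * N / (W0 + W1)))) /
          (1 - (W0 / W1) ^ (2 * (N : ℝ))) ≥
        1 - (W0 / W1) ^ (4 * (W0 * N / (W0 + W1))) := by
  rcases N.eq_zero_or_pos with rfl | hN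
  · simp
  obtain rfl := eq_absorbedWalk hW0' hWrec
  have hW1 : 0 < W1 := hW0.trans hW01
  have hq : 0 < (W0 / (W0 + W1)) ^ 2 := by positivity
  have hqp : (W0 / (W0 + W1)) ^ 2 < (W1 / (W0 + W1)) ^ 2 := by gcongr
  have hpq : (W1 / (W0 + W1)) ^ 2 + (W0 / (W0 + W1)) ^ 2 ≤ 1 := by
    rw [div_pow, div_pow, ← add_div, div_le_one (by positivity)]
    nlinarith
  have hhit := one_sub_pow_le_mul_measureReal_absorbedWalk_hit hXm hindep
    (fun n ↦ .of_measure_eq (by positivity) hq.le hpq (hX1 n) (hX2 n) (hX3 n)) hi hq hqp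
  rw [show (W0 / (W0 + W1)) ^ 2 / (W1 / (W0 + W1)) ^ 2 = (W0 / W1) ^ 2 by field_simp,
    ← pow_mul, ← pow_mul] at hhit
  exact one_sub_rpow_div_bounds (by positivity) ((div_lt_one hW1).2 hW01) hN (by positivity)
    (by linarith) measureReal_nonneg hhit

/-- If the walk starts with at least `2μ₀` ones (where `μ₀ = W₀·N/(W₀+W₁)` and
`2μ₀ ≤ N`), then the probability that the consensus value is `1` is at least
`(1-(W₀/W₁)^(4μ₀))/(1-(W₀/W₁)^(2N))`, which is at least `1-(W₀/W₁)^(4μ₀)`. -/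
theorem epigenetic_majority_conditional
    {Ω : Type*} [MeasurableSpace Ω] (μ : Measure Ω) [IsProbabilityMeasure μ]
    (W0 W1 : ℝ) (hW0 : 0 < W0) (hW01 : W0 < W1)
    (N i : ℕ) (hi : i ≤ N)
    (hstart : 2 * (W0 * N / (W0 + W1)) ≤ (i : ℝ))
    (hμN : 2 * (W0 * N / (W0 + W1)) ≤ (N : ℝ))
    (X : ℕ → Ω → ℤ) (hXm : ∀ n, Measurable (X n))
    (hindep : iIndepFun X μ)
    (hX1 : ∀ n, μ {ω | X n ω = 1} = ENNReal.ofReal ((W1 / (W0 + W1)) ^ 2))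
    (hX2 : ∀ n, μ {ω | X n ω = -1} = ENNReal.ofReal ((W0 / (W0 + W1)) ^ 2))
    (hX3 : ∀ n, μ {ω | X n ω = 0} =
      ENNReal.ofReal (1 - (W1 / (W0 + W1)) ^ 2 - (W0 / (W0 + W1)) ^ 2))
    (W : ℕ → Ω → ℤ) (hW0' : ∀ ω, W 0 ω = (i : ℤ))
    (hWrec : ∀ n ω, W (n + 1) ω =
      if W n ω = 0 ∨ W n ω = (N : ℤ) then W n ω else W n ω + X n ω) :
    (μ {ω | ∃ n, W n ω = (N : ℤ)}).toReal ≥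
        (1 - (W0 / W1) ^ (4 * (W0 * N / (W0 + W1)))) /
          (1 - (W0 / W1) ^ (2 * (N : ℝ))) ∧
      (1 - (W0 / W1) ^ (4 * (W0 * N / (W0 + W1)))) /
          (1 - (W0 / W1) ^ (2 * (N : ℝ))) ≥
        1 - (W0 / W1) ^ (4 * (W0 * N / (W0 + W1))) :=
  epigenetic_majority_conditional_general μ W0 W1 hW0 hW01 N i hi hstart X hXm hindep hX1 hX2 hX3 W
    hW0' hWrec
end

section
/- Let P = (W_1/(W_0+W_1))² and Q = (W_0/(W_0+W_1))² with W_1 > W_0 > 0. Then for 0 ≤ i ≤ N, ((N/(P-Q))·(1-(Q/P)^i)/(1-(Q/P)^N) - i/(P-Q))·(1/(P+Q)) ≤ (N-i)/(P²-Q²). -/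
-- When `r ^ N = 1` the denominator vanishes and the bound holds by `x / 0 = 0`.
theorem gamblersRuin_ratio_le_one {r : ℝ} (hr₀ : 0 ≤ r) (hr₁ : r ≤ 1) {i N : ℕ} (hi : i ≤ N) :
    (1 - r ^ i) / (1 - r ^ N) ≤ 1 :=
  div_le_one_of_le₀ (by linarith [pow_le_pow_of_le_one hr₀ hr₁ hi])
    (sub_nonneg.2 (pow_le_one₀ hr₀ hr₁))

theorem gamblersRuin_expectedTime_le {P Q : ℝ} (hQ : 0 ≤ Q) (hQP : Q ≤ P) {N i : ℕ}
    (hi : i ≤ N) :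
    ((N : ℝ) / (P - Q) * ((1 - (Q / P) ^ i) / (1 - (Q / P) ^ N)) - (i : ℝ) / (P - Q)) *
      (1 / (P + Q)) ≤ ((N : ℝ) - i) / (P ^ 2 - Q ^ 2) := by
  have hP : 0 ≤ P := hQ.trans hQP
  have hratio := gamblersRuin_ratio_le_one (div_nonneg hQ hP) (div_le_one_of_le₀ hQP hP) hi
  calc ((N : ℝ) / (P - Q) * ((1 - (Q / P) ^ i) / (1 - (Q / P) ^ N)) - (i : ℝ) / (P - Q)) *
        (1 / (P + Q))
      ≤ ((N : ℝ) / (P - Q) * 1 - (i : ℝ) / (P - Q)) * (1 / (P + Q)) := by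
        have hPQ : 0 ≤ P - Q := sub_nonneg.2 hQP
        refine mul_le_mul_of_nonneg_right ?_ (one_div_nonneg.2 (by linarith))
        gcongr
    _ = ((N : ℝ) - i) / (P ^ 2 - Q ^ 2) := by
        rw [sq_sub_sq, mul_one, ← sub_div, div_mul_div_comm, mul_one, mul_comm (P + Q)]

/-- Bound on the expected number of update-steps: with `P = (W₁/(W₀+W₁))²` and
`Q = (W₀/(W₀+W₁))²`, `W₁ > W₀ > 0`, the gambler's-ruin expected-time formula is
bounded by `(N-i)/(P²-Q²)`. -/
theorem expected_update_steps_bound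
    (W0 W1 : ℝ) (hW0 : 0 < W0) (hW01 : W0 < W1)
    (N i : ℕ) (hi : i ≤ N) :
    (((N : ℝ) / ((W1 / (W0 + W1)) ^ 2 - (W0 / (W0 + W1)) ^ 2)) *
        ((1 - ((W0 / (W0 + W1)) ^ 2 / (W1 / (W0 + W1)) ^ 2) ^ i) /
          (1 - ((W0 / (W0 + W1)) ^ 2 / (W1 / (W0 + W1)) ^ 2) ^ N)) -
        (i : ℝ) / ((W1 / (W0 + W1)) ^ 2 - (W0 / (W0 + W1)) ^ 2)) *
      (1 / ((W1 / (W0 + W1)) ^ 2 + (W0 / (W0 + W1)) ^ 2)) ≤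
    ((N : ℝ) - i) /
      (((W1 / (W0 + W1)) ^ 2) ^ 2 - ((W0 / (W0 + W1)) ^ 2) ^ 2) := by
  have hsum : 0 < W0 + W1 := by linarith
  refine gamblersRuin_expectedTime_le (sq_nonneg _) ?_ hi
  gcongr
end
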